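/- arXiv:1010.1399 — 7 statements merged into one kernel-verified Lean document; each statement's English description precedes it below -/
import Mathlib

section
/- Let (s_n) be a strictly increasing sequence of positive reals with 1/s_n → 0 as n → ∞, and suppose lim_{n→∞} s_{⌊nt⌋}/s_n = t for every real t in [0,1]. Then for any real numbers 0 ≤ a < b ≤ 1, the proportion of indices r ≤ n with a ≤ s_r/s_n ≤ b tends to b - a as n → ∞. -/
/-!
If `s ⌊n t⌋ / s n → t`, then for `t < c` eventually all `r ≤ ⌊n t⌋` have `s r / s n < c`, and for
`t > c` eventually all `r` with `s r / s n ≤ c` lie below `⌊n t⌋`. Since `⌊n t⌋ / n → t`, the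
proportion of `r ≤ n` with `s r / s n < c` (or `≤ c`) is squeezed to `c`, and the proportion with
`a ≤ s r / s n ≤ b` is the difference of two such proportions.
-/

open Filter Finset Topology

lemma card_filter_and_add_card_filter_lt {α : Type*} (S : Finset α) (f : α → ℝ) {a b : ℝ}
    (hab : a ≤ b) : #{x ∈ S | a ≤ f x ∧ f x ≤ b} + #{x ∈ S | f x < a} = #{x ∈ S | f x ≤ b} := by
  rw [← card_filter_add_card_filter_not (s := {x ∈ S | f x ≤ b}) (fun x => a ≤ f x),
    filter_filter, filter_filter]
  congr 2 <;> ext x <;> simp only [mem_filter, not_le]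
  · tauto
  · exact and_congr_right fun _ => ⟨fun h => ⟨h.le.trans hab, h⟩, fun h => h.2⟩

lemma tendsto_nat_floor_mul_div_nat {t : ℝ} (ht : 0 ≤ t) :
    Tendsto (fun n : ℕ => (⌊(n : ℝ) * t⌋₊ : ℝ) / n) atTop (𝓝 t) := by
  simpa only [Function.comp_def, mul_comm] using
    (tendsto_nat_floor_mul_div_atTop ht).comp tendsto_natCast_atTop_atTop

section RatioCount

variable {s : ℕ → ℝ} {n : ℕ} {t c : ℝ}

lemma floor_mul_le_card_filter_lt (hs : Monotone s) (hn : 0 < s n) (ht : t ≤ 1)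
    (h : s ⌊(n : ℝ) * t⌋₊ / s n < c) : ⌊(n : ℝ) * t⌋₊ ≤ #{r ∈ Icc 1 n | s r / s n < c} := by
  have hfloor : ⌊(n : ℝ) * t⌋₊ ≤ n :=
    Nat.floor_le_of_le (mul_le_of_le_one_right n.cast_nonneg ht)
  calc ⌊(n : ℝ) * t⌋₊ = #(Icc 1 ⌊(n : ℝ) * t⌋₊) := by simp
    _ ≤ #{r ∈ Icc 1 n | s r / s n < c} := card_le_card fun r hr => by
      rw [mem_Icc] at hr
      refine mem_filter.2 ⟨mem_Icc.2 ⟨hr.1, hr.2.trans hfloor⟩, lt_of_le_of_lt ?_ h⟩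
      exact div_le_div_of_nonneg_right (hs hr.2) hn.le

lemma card_filter_le_le_floor_mul (hs : Monotone s) (hn : 0 < s n)
    (h : c < s ⌊(n : ℝ) * t⌋₊ / s n) : #{r ∈ Icc 1 n | s r / s n ≤ c} ≤ ⌊(n : ℝ) * t⌋₊ := by
  calc #{r ∈ Icc 1 n | s r / s n ≤ c} ≤ #(range ⌊(n : ℝ) * t⌋₊) := card_le_card fun r hr =>
        mem_range.2 <| hs.reflect_lt <| (div_lt_div_iff_of_pos_right hn).1 <|
          lt_of_le_of_lt (mem_filter.1 hr).2 h
    _ = ⌊(n : ℝ) * t⌋₊ := card_range _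

lemma card_filter_lt_le_card_filter_le :
    #{r ∈ Icc 1 n | s r / s n < c} ≤ #{r ∈ Icc 1 n | s r / s n ≤ c} :=
  card_le_card <| monotone_filter_right _ fun _ _ => le_of_lt

variable (hs : Monotone s) (hpos : ∀ n, 0 < s n)
  (hlim : ∀ t ∈ Set.Icc (0 : ℝ) 1, Tendsto (fun n : ℕ => s ⌊(n : ℝ) * t⌋₊ / s n) atTop (𝓝 t))
include hs hpos hlim

lemma eventually_lt_card_filter_lt_div (hc : c ≤ 1) {x : ℝ} (hx : x < c) :
    ∀ᶠ n : ℕ in atTop, x < #{r ∈ Icc 1 n | s r / s n < c} / (n : ℝ) := by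
  rcases lt_or_ge x 0 with hx0 | hx0
  · exact Eventually.of_forall fun n => hx0.trans_le (by positivity)
  obtain ⟨t, hxt, htc⟩ := exists_between hx
  have ht : t ∈ Set.Icc (0 : ℝ) 1 := ⟨hx0.trans hxt.le, htc.le.trans hc⟩
  filter_upwards [(hlim t ht).eventually_lt_const htc,
    (tendsto_nat_floor_mul_div_nat ht.1).eventually_const_lt hxt]
    with n hn hfloor
  refine hfloor.trans_le (div_le_div_of_nonneg_right ?_ n.cast_nonneg)
  exact_mod_cast floor_mul_le_card_filter_lt hs (hpos n) ht.2 hn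

lemma eventually_card_filter_le_div_lt (hc : 0 ≤ c) {x : ℝ} (hx : c < x) :
    ∀ᶠ n : ℕ in atTop, #{r ∈ Icc 1 n | s r / s n ≤ c} / (n : ℝ) < x := by
  rcases lt_or_ge 1 x with hx1 | hx1
  · refine Eventually.of_forall fun n => lt_of_le_of_lt (div_le_one_of_le₀ ?_ n.cast_nonneg) hx1
    exact_mod_cast (card_filter_le _ _).trans (Nat.card_Icc 1 n).le
  obtain ⟨t, hct, htx⟩ := exists_between hx
  have ht : t ∈ Set.Icc (0 : ℝ) 1 := ⟨hc.trans hct.le, htx.le.trans hx1⟩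
  filter_upwards [(hlim t ht).eventually_const_lt hct,
    (tendsto_nat_floor_mul_div_nat ht.1).eventually_lt_const htx]
    with n hn hfloor
  refine lt_of_le_of_lt (div_le_div_of_nonneg_right ?_ n.cast_nonneg) hfloor
  exact_mod_cast card_filter_le_le_floor_mul hs (hpos n) hn

lemma tendsto_card_filter_lt_div (hc0 : 0 ≤ c) (hc1 : c ≤ 1) :
    Tendsto (fun n : ℕ => #{r ∈ Icc 1 n | s r / s n < c} / (n : ℝ)) atTop (𝓝 c) :=
  tendsto_order.2 ⟨fun _ hx => eventually_lt_card_filter_lt_div hs hpos hlim hc1 hx,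
    fun _ hx => (eventually_card_filter_le_div_lt hs hpos hlim hc0 hx).mono fun n hn =>
      lt_of_le_of_lt (div_le_div_of_nonneg_right (by exact_mod_cast
        card_filter_lt_le_card_filter_le) n.cast_nonneg) hn⟩

lemma tendsto_card_filter_le_div (hc0 : 0 ≤ c) (hc1 : c ≤ 1) :
    Tendsto (fun n : ℕ => #{r ∈ Icc 1 n | s r / s n ≤ c} / (n : ℝ)) atTop (𝓝 c) :=
  tendsto_order.2 ⟨fun _ hx => (eventually_lt_card_filter_lt_div hs hpos hlim hc1 hx).mono
      fun n hn => hn.trans_le (div_le_div_of_nonneg_right (by exact_mod_cast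
        card_filter_lt_le_card_filter_le) n.cast_nonneg),
    fun _ hx => eventually_card_filter_le_div_lt hs hpos hlim hc0 hx⟩

end RatioCount

theorem stmt_2_general
    (s : ℕ → ℝ) (hmono : StrictMono s) (hpos : ∀ n, 0 < s n)
    (hlim : ∀ t : ℝ, t ∈ Set.Icc (0 : ℝ) 1 →
      Tendsto (fun n : ℕ => s ⌊(n : ℝ) * t⌋₊ / s n) atTop (nhds t))
    (a b : ℝ) (ha : 0 ≤ a) (hab : a < b) (hb : b ≤ 1) :
    Tendsto
      (fun n : ℕ =>
        (((Finset.Icc 1 n).filter (fun r => a ≤ s r / s n ∧ s r / s n ≤ b)).card : ℝ) / n)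
      atTop (nhds (b - a)) := by
  have hle := tendsto_card_filter_le_div hmono.monotone hpos hlim (ha.trans hab.le) hb
  have hlt := tendsto_card_filter_lt_div hmono.monotone hpos hlim ha (hab.le.trans hb)
  refine (hle.sub hlt).congr fun n => ?_
  rw [← sub_div, ← card_filter_and_add_card_filter_lt _ (fun r => s r / s n) hab.le]
  push_cast
  ring

theorem stmt_2
    (s : ℕ → ℝ) (hmono : StrictMono s) (hpos : ∀ n, 0 < s n)
    (hinv : Tendsto (fun n => 1 / s n) atTop (nhds 0))
    (hlim : ∀ t : ℝ, t ∈ Set.Icc (0 : ℝ) 1 →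
      Tendsto (fun n : ℕ => s ⌊(n : ℝ) * t⌋₊ / s n) atTop (nhds t))
    (a b : ℝ) (ha : 0 ≤ a) (hab : a < b) (hb : b ≤ 1) :
    Tendsto
      (fun n : ℕ =>
        (((Finset.Icc 1 n).filter (fun r => a ≤ s r / s n ∧ s r / s n ≤ b)).card : ℝ) / n)
      atTop (nhds (b - a)) :=
  stmt_2_general s hmono hpos hlim a b ha hab hb
end

section
/- Let (s_n) be a strictly increasing sequence of positive reals with lim_{n→∞} s_{⌊nt⌋}/s_n = t for all t ∈ [0,1], 1/s_n → 0, and suppose additionally that s_n^(1/n) → 1 as n → ∞. Then s_n^(1/n) - ((n+1)/n^2) Σ_{r ≤ n} s_r^(1/n) → 0 as n → ∞. -/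
/-!
Since `r ↦ s r ^ (1 / n)` is monotone, the average `(1 / n) ∑_{r ≤ n} s r ^ (1 / n)` lies between
`s 1 ^ (1 / n) → 1` and `s n ^ (1 / n) → 1`, and the extra factor `(n + 1) / n` tends to `1`.
-/

open Filter Real Topology Finset

lemma tendsto_const_rpow_one_div_nat {x : ℝ} (hx : 0 < x) :
    Tendsto (fun n : ℕ => x ^ ((1 : ℝ) / n)) atTop (𝓝 1) := by
  simpa [Function.comp_def] using
    (continuousAt_const_rpow hx.ne').tendsto.comp tendsto_one_div_atTop_nhds_zero_nat

lemma tendsto_sum_Icc_div_of_monotone {g : ℕ → ℕ → ℝ} {L : ℝ} (hg : ∀ n, Monotone (g n))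
    (hfirst : Tendsto (fun n => g n 1) atTop (𝓝 L))
    (hlast : Tendsto (fun n => g n n) atTop (𝓝 L)) :
    Tendsto (fun n : ℕ => (∑ r ∈ Icc 1 n, g n r) / n) atTop (𝓝 L) := by
  refine tendsto_of_tendsto_of_tendsto_of_le_of_le' hfirst hlast ?_ ?_
  · filter_upwards [eventually_ge_atTop 1] with n hn
    rw [le_div_iff₀ (by exact_mod_cast hn)]
    simpa [mul_comm] using
      card_nsmul_le_sum (Icc 1 n) (g n) (g n 1) fun r hr => hg n (mem_Icc.mp hr).1
  · filter_upwards [eventually_ge_atTop 1] with n hn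
    rw [div_le_iff₀ (by exact_mod_cast hn)]
    simpa [mul_comm] using
      sum_le_card_nsmul (Icc 1 n) (g n) (g n n) fun r hr => hg n (mem_Icc.mp hr).2

theorem stmt_6_general
    (s : ℕ → ℝ) (hmono : StrictMono s) (hpos : ∀ n, 0 < s n)
    (hroot : Tendsto (fun n : ℕ => s n ^ ((1 : ℝ) / n)) atTop (nhds 1)) :
    Tendsto
      (fun n : ℕ =>
        s n ^ ((1 : ℝ) / n) -
          (((n : ℝ) + 1) / (n : ℝ) ^ 2) * ∑ r ∈ Finset.Icc 1 n, s r ^ ((1 : ℝ) / n))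
      atTop (nhds 0) := by
  have hmean : Tendsto (fun n : ℕ => (∑ r ∈ Icc 1 n, s r ^ ((1 : ℝ) / n)) / n) atTop (𝓝 1) :=
    tendsto_sum_Icc_div_of_monotone
      (fun n _ _ hab => rpow_le_rpow (hpos _).le (hmono.monotone hab) (by positivity))
      (tendsto_const_rpow_one_div_nat (hpos 1)) hroot
  have hfactor : Tendsto (fun n : ℕ => 1 + (1 : ℝ) / n) atTop (𝓝 1) := by
    simpa using tendsto_one_div_atTop_nhds_zero_nat.const_add (1 : ℝ)
  have hweighted : Tendsto (fun n : ℕ => (((n : ℝ) + 1) / (n : ℝ) ^ 2) *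
      ∑ r ∈ Icc 1 n, s r ^ ((1 : ℝ) / n)) atTop (𝓝 1) := by
    refine (one_mul (1 : ℝ) ▸ hfactor.mul hmean).congr' ?_
    filter_upwards [eventually_ne_atTop 0] with n hn
    field_simp
  simpa using hroot.sub hweighted

theorem stmt_6
    (s : ℕ → ℝ) (hmono : StrictMono s) (hpos : ∀ n, 0 < s n)
    (hinv : Tendsto (fun n => 1 / s n) atTop (nhds 0))
    (hlim : ∀ t : ℝ, t ∈ Set.Icc (0 : ℝ) 1 →
      Tendsto (fun n : ℕ => s ⌊(n : ℝ) * t⌋₊ / s n) atTop (nhds t))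
    (hroot : Tendsto (fun n : ℕ => s n ^ ((1 : ℝ) / n)) atTop (nhds 1)) :
    Tendsto
      (fun n : ℕ =>
        s n ^ ((1 : ℝ) / n) -
          (((n : ℝ) + 1) / (n : ℝ) ^ 2) * ∑ r ∈ Finset.Icc 1 n, s r ^ ((1 : ℝ) / n))
      atTop (nhds 0) :=
  stmt_6_general s hmono hpos hroot
end

section
/- With p_n the n-th prime, p_n^(1/n) - ((n+1)/n^2) Σ_{r ≤ n} p_r^(1/n) → 0 as n → ∞. -/
/-!
Every term `p_r^(1/n)` with `r ≤ n` lies between `1` and `p_n^(1/n)`, so once `p_n^(1/n) → 1`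
the sum is `n (1 + o(1))` and the weight `(n+1)/n²` turns it into `1 + o(1)`. The limit
`p_n^(1/n) → 1` needs only `log p_n = o(n)`, i.e. `log x = o(π x)`, which follows from
Chebyshev's lower bound `π x ≥ (x log 2 - log (x+1)) / log x`.
-/

open Filter Real

/-- `p n` is the n-th prime, 1-indexed: `p 1 = 2`. -/
noncomputable def p (n : ℕ) : ℕ := Nat.nth Nat.Prime (n - 1)

open Finset Topology

theorem tendsto_log_div_primeCounting :
    Tendsto (fun x : ℕ => log x / x.primeCounting) atTop (𝓝 0) := by
  have hnum : Tendsto (fun x : ℕ => log x ^ 2 / x) atTop (𝓝 0) := by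
    simpa [Function.comp_def] using (tendsto_pow_log_div_mul_add_atTop 1 0 2 one_ne_zero).comp
      tendsto_natCast_atTop_atTop
  have hlog_succ : Tendsto (fun x : ℕ => log (x + 1) / x) atTop (𝓝 0) := by
    simpa [Function.comp_def] using (tendsto_pow_log_div_mul_add_atTop 1 (-1) 1 one_ne_zero).comp
      (tendsto_atTop_add_const_right _ (1 : ℝ) tendsto_natCast_atTop_atTop)
  have hden : Tendsto (fun x : ℕ => log 2 - log (x + 1) / x) atTop (𝓝 (log 2)) := by
    simpa using hlog_succ.const_sub (log 2)
  have hbound : Tendsto (fun x : ℕ => (log x ^ 2 / x) / (log 2 - log (x + 1) / x))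
      atTop (𝓝 0) := by
    simpa [Pi.div_def] using hnum.div hden (log_pos one_lt_two).ne'
  refine squeeze_zero' (Eventually.of_forall fun x => by positivity) ?_ hbound
  filter_upwards [eventually_gt_atTop 1, hden.eventually (eventually_gt_nhds (log_pos one_lt_two))]
    with x hx hpos
  have hlog : 0 < log x := log_pos (by exact_mod_cast hx)
  have hx0 : (0 : ℝ) < x := by positivity
  have hcheb : (x * log 2 - log (x + 1)) / log x ≤ x.primeCounting := Chebyshev.pi_ge x
  have hcheb_pos : 0 < (x * log 2 - log (x + 1)) / log x := by
    have : 0 < x * (log 2 - log (x + 1) / x) := mul_pos hx0 hpos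
    rw [mul_sub, mul_div_cancel₀ _ hx0.ne'] at this
    positivity
  calc log x / x.primeCounting ≤ log x / ((x * log 2 - log (x + 1)) / log x) :=
        div_le_div_of_nonneg_left hlog.le hcheb_pos hcheb
    _ = (log x ^ 2 / x) / (log 2 - log (x + 1) / x) := by
        field_simp

lemma p_prime (n : ℕ) : (p n).Prime := Nat.prime_nth_prime _

lemma p_monotone : Monotone p :=
  (Nat.nth_monotone Nat.infinite_setOfPred_prime).comp fun _ _ h => Nat.sub_le_sub_right h 1

lemma tendsto_p_atTop : Tendsto p atTop atTop :=
  (Nat.nth_strictMono Nat.infinite_setOfPred_prime).tendsto_atTop.comp (tendsto_sub_atTop_nat 1)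

lemma primeCounting_p {n : ℕ} (hn : n ≠ 0) : (p n).primeCounting = n := by
  rw [Nat.primeCounting, Nat.primeCounting', p,
    Nat.count_nth_succ_of_infinite Nat.infinite_setOfPred_prime]
  omega

lemma tendsto_log_p_div : Tendsto (fun n : ℕ => log (p n) / n) atTop (𝓝 0) := by
  refine (tendsto_log_div_primeCounting.comp tendsto_p_atTop).congr' ?_
  filter_upwards [eventually_ne_atTop 0] with n hn
  simp [primeCounting_p hn]

lemma tendsto_p_rpow_one_div : Tendsto (fun n : ℕ => (p n : ℝ) ^ ((1 : ℝ) / n)) atTop (𝓝 1) := by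
  refine (tendsto_exp_nhds_zero_nhds_one.comp tendsto_log_p_div).congr fun n => ?_
  rw [Function.comp_apply, rpow_def_of_pos (by exact_mod_cast (p_prime n).pos), mul_one_div]

lemma tendsto_sum_Icc_rpow_one_div_div {a : ℕ → ℝ} (ha : ∀ n, 1 ≤ a n) (hmono : Monotone a)
    (hlim : Tendsto (fun n : ℕ => a n ^ ((1 : ℝ) / n)) atTop (𝓝 1)) :
    Tendsto (fun n : ℕ => (∑ r ∈ Icc 1 n, a r ^ ((1 : ℝ) / n)) / n) atTop (𝓝 1) := by
  refine tendsto_of_tendsto_of_tendsto_of_le_of_le' tendsto_const_nhds hlim ?_ ?_ <;>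
    filter_upwards [eventually_ne_atTop 0] with n hn <;>
    have hn' : (0 : ℝ) < n := by positivity
  · rw [le_div_iff₀ hn']
    simpa using card_nsmul_le_sum (Icc 1 n) _ 1 fun r _ => one_le_rpow (ha r) (by positivity)
  · rw [div_le_iff₀' hn']
    simpa using sum_le_card_nsmul (Icc 1 n) _ _ fun r hr =>
      rpow_le_rpow (by linarith [ha r]) (hmono (mem_Icc.1 hr).2) (by positivity)

theorem stmt_7 :
    Tendsto
      (fun n : ℕ =>
        (p n : ℝ) ^ ((1 : ℝ) / n) -
          (((n : ℝ) + 1) / (n : ℝ) ^ 2) * ∑ r ∈ Finset.Icc 1 n, (p r : ℝ) ^ ((1 : ℝ) / n))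
      atTop (nhds 0) := by
  have hmean := tendsto_sum_Icc_rpow_one_div_div (fun n => by exact_mod_cast (p_prime n).one_le)
    (fun _ _ h => by exact_mod_cast p_monotone h) tendsto_p_rpow_one_div
  have hlim := tendsto_p_rpow_one_div.sub (hmean.add (hmean.mul tendsto_inv_atTop_nhds_zero_nat))
  simp only [mul_zero, add_zero, sub_self] at hlim
  refine hlim.congr' ?_
  filter_upwards [eventually_ne_atTop 0] with n hn
  field_simp
end

section
/- n^(1/n) - ((n+1)/n^2) Σ_{r ≤ n} r^(1/n) → 0 as n → ∞. -/
/-!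
Every term `r ^ (1/n)` with `1 ≤ r ≤ n` lies between `1` and `n ^ (1/n)`, and `n ^ (1/n) → 1`,
so the mean `(1/n) ∑ r ^ (1/n)` is squeezed to `1`. Since `(n+1)/n^2 ∑ r ^ (1/n)` is
`(1 + 1/n)` times this mean, the difference tends to `1 - 1 * 1 = 0`.
-/

open Filter Real Finset Topology

lemma tendsto_natCast_rpow_one_div_self :
    Tendsto (fun n : ℕ => (n : ℝ) ^ ((1 : ℝ) / n)) atTop (𝓝 1) :=
  tendsto_rpow_div.comp tendsto_natCast_atTop_atTop

lemma tendsto_sum_Icc_div_of_le_of_le {f : ℕ → ℕ → ℝ} {a b : ℕ → ℝ} {L : ℝ}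
    (ha : Tendsto a atTop (𝓝 L)) (hb : Tendsto b atTop (𝓝 L))
    (hf : ∀ n r, r ∈ Icc 1 n → a n ≤ f n r ∧ f n r ≤ b n) :
    Tendsto (fun n => (∑ r ∈ Icc 1 n, f n r) / n) atTop (𝓝 L) := by
  refine tendsto_of_tendsto_of_tendsto_of_le_of_le' ha hb ?_ ?_ <;>
    filter_upwards [eventually_gt_atTop 0] with n hn <;>
    have hn' : (0 : ℝ) < n := by exact_mod_cast hn
  · have hsum := card_nsmul_le_sum (Icc 1 n) (f n) (a n) fun r hr => (hf n r hr).1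
    rw [Nat.card_Icc, nsmul_eq_mul, Nat.add_sub_cancel] at hsum
    rwa [le_div_iff₀ hn', mul_comm]
  · have hsum := sum_le_card_nsmul (Icc 1 n) (f n) (b n) fun r hr => (hf n r hr).2
    rw [Nat.card_Icc, nsmul_eq_mul, Nat.add_sub_cancel] at hsum
    rwa [div_le_iff₀ hn', mul_comm]

lemma one_le_rpow_one_div_le_of_mem_Icc {n r : ℕ} (hr : r ∈ Icc 1 n) :
    1 ≤ (r : ℝ) ^ ((1 : ℝ) / n) ∧ (r : ℝ) ^ ((1 : ℝ) / n) ≤ (n : ℝ) ^ ((1 : ℝ) / n) := by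
  rw [mem_Icc] at hr
  exact ⟨one_le_rpow (by exact_mod_cast hr.1) (by positivity),
    rpow_le_rpow (by positivity) (by exact_mod_cast hr.2) (by positivity)⟩

theorem stmt_8 :
    Tendsto
      (fun n : ℕ =>
        (n : ℝ) ^ ((1 : ℝ) / n) -
          (((n : ℝ) + 1) / (n : ℝ) ^ 2) * ∑ r ∈ Finset.Icc 1 n, (r : ℝ) ^ ((1 : ℝ) / n))
      atTop (nhds 0) := by
  have hmean : Tendsto (fun n : ℕ => (∑ r ∈ Icc 1 n, (r : ℝ) ^ ((1 : ℝ) / n)) / n)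
      atTop (𝓝 1) :=
    tendsto_sum_Icc_div_of_le_of_le tendsto_const_nhds tendsto_natCast_rpow_one_div_self
      fun _ _ => one_le_rpow_one_div_le_of_mem_Icc
  have hfactor : Tendsto (fun n : ℕ => 1 + 1 / (n : ℝ)) atTop (𝓝 1) := by
    simpa using (tendsto_one_div_atTop_nhds_zero_nat (𝕜 := ℝ)).const_add 1
  have hlim := tendsto_natCast_rpow_one_div_self.sub (hfactor.mul hmean)
  rw [mul_one, sub_self] at hlim
  refine hlim.congr' ?_
  filter_upwards [eventually_ne_atTop 0] with n hn
  have hn' : (n : ℝ) ≠ 0 := by exact_mod_cast hn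
  field_simp
end

section
/- Let (s_n) be a strictly increasing sequence of positive reals with s_n > n, ln s_n = o(n), and s_{n+1}/s_n → 1, and define h(n) = ((n+1)/n^2) Σ_{r ≤ n} s_r^(1/n). Then there exists a constant c > 1 such that for all sufficiently large n, h(n)/h(n+1) > 1 - c (ln s_n)/n^2. -/
open Filter Real Asymptotics

private lemma exp_le_aux {x : ℝ} (hx0 : 0 ≤ x) (hx : x ≤ 1/2) :
    Real.exp x ≤ 1 + 2*x := by
  have h1 : -x + 1 ≤ Real.exp (-x) := Real.add_one_le_exp _
  rw [Real.exp_neg] at h1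
  have h2 : 0 < Real.exp x := Real.exp_pos x
  have h3 : Real.exp x * (1 - x) ≤ 1 := by
    have h4 := mul_le_mul_of_nonneg_left h1 h2.le
    rw [mul_inv_cancel₀ h2.ne'] at h4
    nlinarith
  nlinarith

theorem stmt_9
    (s : ℕ → ℝ) (hmono : StrictMono s) (hgt : ∀ n : ℕ, (n : ℝ) < s n)
    (hlog : (fun n : ℕ => Real.log (s n)) =o[atTop] (fun n : ℕ => (n : ℝ)))
    (hratio : Tendsto (fun n : ℕ => s (n + 1) / s n) atTop (nhds 1))
    (h : ℕ → ℝ)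
    (hdef : ∀ n : ℕ,
      h n = (((n : ℝ) + 1) / (n : ℝ) ^ 2) * ∑ r ∈ Finset.Icc 1 n, s r ^ ((1 : ℝ) / n)) :
    ∃ c : ℝ, c > 1 ∧ ∀ᶠ n : ℕ in atTop,
      h n / h (n + 1) > 1 - c * Real.log (s n) / (n : ℝ) ^ 2 := by
  refine ⟨8, by norm_num, ?_⟩
  have hspos : ∀ n, 0 < s n := fun n => (Nat.cast_nonneg n).trans_lt (hgt n)
  have hs1 : ∀ r : ℕ, 1 ≤ r → 1 < s r := fun r hr =>
    lt_of_le_of_lt (by exact_mod_cast hr) (hgt r)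
  -- E2 : eventually log s (n+1) ≤ (n+1)/2
  have E2 : ∀ᶠ n : ℕ in atTop, Real.log (s (n+1)) ≤ ((n:ℝ)+1)/2 := by
    have hb := hlog.bound (c := 1/2) (by norm_num)
    rw [eventually_atTop] at hb ⊢
    obtain ⟨N, hN⟩ := hb
    refine ⟨N, fun n hn => ?_⟩
    have h1 := hN (n+1) (hn.trans (Nat.le_succ n))
    simp only [Real.norm_eq_abs] at h1
    have h2 : Real.log (s (n+1)) ≤ |Real.log (s (n+1))| := le_abs_self _
    have h3 : |((n+1:ℕ):ℝ)| = (n:ℝ)+1 := by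
      rw [abs_of_nonneg (by positivity)]; push_cast; ring
    rw [h3] at h1
    linarith
  -- E3 : eventually log s (n+1) ≤ log s n + 1
  have E3 : ∀ᶠ n : ℕ in atTop, Real.log (s (n+1)) ≤ Real.log (s n) + 1 := by
    have hlt : ∀ᶠ n : ℕ in atTop, s (n+1) / s n < Real.exp 1 :=
      hratio.eventually (eventually_lt_nhds (by
        have := Real.exp_one_gt_d9; linarith))
    filter_upwards [hlt] with n hn
    have hpos : 0 < s (n+1) / s n := div_pos (hspos _) (hspos _)
    have := Real.log_lt_log hpos hn
    rw [Real.log_exp, Real.log_div (hspos _).ne' (hspos _).ne'] at this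
    linarith
  filter_upwards [E2, E3, eventually_ge_atTop 3] with n hE2 hE3 hn3
  set X : ℝ := (n : ℝ) with hXdef
  have hX3 : (3:ℝ) ≤ X := by show (3:ℝ) ≤ (n:ℝ); exact_mod_cast hn3
  set L := Real.log (s n) with hLdef
  set M := Real.log (s (n+1)) with hMdef
  have hL1 : 1 ≤ L := by
    rw [hLdef, Real.le_log_iff_exp_le (hspos n)]
    have := Real.exp_one_lt_d9
    have := hgt n
    linarith
  have hLM : L ≤ M := Real.log_le_log (hspos n) (hmono (Nat.lt_succ_self n)).le
  have hM4 : 2 * M ≤ 4 * L := by linarith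
  -- sums
  set A := ∑ r ∈ Finset.Icc 1 (n+1), s r ^ ((1:ℝ) / ((n:ℝ)+1)) with hAdef
  set S := ∑ r ∈ Finset.Icc 1 n, s r ^ ((1:ℝ) / X) with hSdef
  set t := s (n+1) ^ ((1:ℝ) / ((n:ℝ)+1)) with htdef
  have hne : (Finset.Icc 1 (n+1)).Nonempty := ⟨1, by simp⟩
  -- A > X + 1
  have hA : X + 1 < A := by
    have h1 : ∑ r ∈ Finset.Icc 1 (n+1), (1:ℝ) < A := by
      refine Finset.sum_lt_sum_of_nonempty hne (fun i hi => ?_)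
      rw [Finset.mem_Icc] at hi
      exact Real.one_lt_rpow_iff_of_pos (hspos i) |>.mpr
        (Or.inl ⟨hs1 i hi.1, by positivity⟩)
    simpa [Nat.card_Icc, add_comm] using h1
  have hApos : 0 < A := by linarith
  -- S ≥ A - t
  have hS : A - t ≤ S := by
    have hsplit : A = (∑ r ∈ Finset.Icc 1 n, s r ^ ((1:ℝ) / ((n:ℝ)+1))) + t := by
      rw [hAdef, Finset.sum_Icc_succ_top (Nat.succ_le_succ (Nat.zero_le n))]
    have hterm : ∀ r ∈ Finset.Icc 1 n,
        s r ^ ((1:ℝ) / ((n:ℝ)+1)) ≤ s r ^ ((1:ℝ) / X) := by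
      intro r hr
      rw [Finset.mem_Icc] at hr
      refine Real.rpow_le_rpow_of_exponent_le (hs1 r hr.1).le ?_
      apply one_div_le_one_div_of_le (by linarith) (by linarith)
    have := Finset.sum_le_sum hterm
    rw [hsplit]; linarith
  -- t bound
  have htb : t * (X+1) ≤ X + 1 + 4*L := by
    have hteq : t = Real.exp (M / (X+1)) := by
      rw [htdef, Real.rpow_def_of_pos (hspos (n+1)), ← hMdef, mul_one_div, hMdef]
    have hx0 : 0 ≤ M / (X+1) := by
      apply div_nonneg (by linarith) (by linarith)
    have hx2 : M / (X+1) ≤ 1/2 := by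
      rw [div_le_iff₀ (by linarith : (0:ℝ) < X+1)]
      linarith
    have := exp_le_aux hx0 hx2
    rw [← hteq] at this
    have h5 : t ≤ 1 + 2 * (M/(X+1)) := this
    have h6 : t * (X+1) ≤ (1 + 2*(M/(X+1))) * (X+1) :=
      mul_le_mul_of_nonneg_right h5 (by linarith)
    have h7 : (1 + 2*(M/(X+1))) * (X+1) = X + 1 + 2*M := by
      field_simp
      try ring
    rw [h7] at h6
    linarith
  -- key polynomial inequality
  have hkey : (X^2 - 8*L) * ((X+2) * A) < (X+1)^3 * S := by
    have c1 : (X+1)^3 * (A - t) ≤ (X+1)^3 * S :=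
      mul_le_mul_of_nonneg_left hS (by positivity)
    have c2 : (X+1)^2 * (t*(X+1)) ≤ (X+1)^2 * (X+1+4*L) :=
      mul_le_mul_of_nonneg_left htb (by positivity)
    have c3 : (X+1) * (X^2+3*X+1+8*L*(X+2)) < A * (X^2+3*X+1+8*L*(X+2)) := by
      apply mul_lt_mul_of_pos_right hA
      nlinarith
    nlinarith [c1, c2, c3, mul_nonneg (by linarith : (0:ℝ) ≤ L)
      (by nlinarith : (0:ℝ) ≤ (X+1)*(X+3))]
  -- assemble
  have hApos' : 0 < h (n+1) := by
    rw [hdef (n+1)]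
    push_cast
    have : (0:ℝ) < A := hApos
    rw [hAdef] at this
    positivity
  rw [gt_iff_lt, lt_div_iff₀ hApos', hdef n, hdef (n+1)]
  push_cast
  have hgoal : (1 - 8 * L / X ^ 2) * ((X + 1 + 1) / (X + 1) ^ 2 * A) < (X + 1) / X ^ 2 * S := by
    have e1 : (1 - 8 * L / X ^ 2) * ((X + 1 + 1) / (X + 1) ^ 2 * A)
        = ((X^2 - 8*L) * ((X+2) * A)) / (X^2 * (X+1)^2) := by
      field_simp
      try ring
      try tauto
    have e2 : (X + 1) / X ^ 2 * S = ((X+1)^3 * S) / (X^2 * (X+1)^2) := by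
      field_simp
      try ring
    have hden : (0:ℝ) < X^2 * (X+1)^2 := by positivity
    rw [e1, e2, div_lt_div_iff_of_pos_right hden]
    exact hkey
  exact hgoal
end

section
/- Define b_n = -(1/ln n) * ln(n^(1/n)/(n+1)^(1/(n+1)) - 1) for n ≥ 3. Then b_n → 2 as n → ∞; more precisely, b_n = 2 - (ln ln n)/(ln n) + o((ln ln n)/(ln n)). -/
open Filter Real Asymptotics

noncomputable def b (n : ℕ) : ℝ :=
  -(1 / Real.log n) *
    Real.log ((n : ℝ) ^ ((1 : ℝ) / n) / ((n : ℝ) + 1) ^ ((1 : ℝ) / (n + 1)) - 1)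

open Topology

/-!
The ratio `n^(1/n) / (n+1)^(1/(n+1))` is `exp δ(n)` with `δ(x) = log x / x - log (x+1) / (x+1)`.
Since `δ(x) ~ log x / x²` and `δ → 0`, also `exp δ - 1 ~ log x / x²`, so
`log (exp δ(n) - 1) = log log n - 2 log n + o(1)`; dividing by `-log n` gives
`b n = 2 - log log n / log n + o(1 / log n)`.
-/

lemma isEquivalent_exp_sub_one : (fun x => exp x - 1) ~[𝓝 0] id := by
  refine IsLittleO.isEquivalent ?_
  have h := hasDerivAt_iff_isLittleO.1 (hasDerivAt_exp 0)
  simp only [exp_zero, sub_zero, smul_eq_mul, mul_one] at h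
  exact h

lemma Asymptotics.IsEquivalent.tendsto_log_sub_log {α : Type*} {l : Filter α} {u v : α → ℝ}
    (huv : u ~[l] v) (hv : ∀ᶠ x in l, v x ≠ 0) :
    Tendsto (fun x => Real.log (u x) - Real.log (v x)) l (𝓝 0) := by
  have hratio := (isEquivalent_iff_tendsto_one hv).1 huv
  have hu : ∀ᶠ x in l, u x ≠ 0 := by
    filter_upwards [hratio.eventually_ne one_ne_zero] with x hx hux
    simp [hux] at hx
  simpa using (hratio.log one_ne_zero).congr' <| by
    filter_upwards [hu, hv] with x hux hvx using log_div hux hvx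

lemma isLittleO_div_log_div {α : Type*} {l : Filter α} {g L : α → ℝ}
    (hg : Tendsto g l (𝓝 0)) (hL : Tendsto L l atTop) :
    (fun x => g x / L x) =o[l] fun x => log (L x) / L x := by
  have hlog : (fun _ => (1 : ℝ)) =o[l] fun x => log (L x) :=
    (isLittleO_one_left_iff ℝ).2 (tendsto_norm_atTop_atTop.comp (tendsto_log_atTop.comp hL))
  simpa only [div_eq_mul_inv] using
    (((isLittleO_one_iff ℝ).2 hg).trans hlog).mul_isBigO (isBigO_refl (fun x => (L x)⁻¹) l)

noncomputable def logGap (x : ℝ) : ℝ := log x / x - log (x + 1) / (x + 1)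

lemma rpow_one_div_div_rpow_one_div_eq_exp_logGap {x : ℝ} (hx : 0 < x) :
    x ^ (1 / x) / (x + 1) ^ (1 / (x + 1)) = exp (logGap x) := by
  rw [rpow_def_of_pos hx, rpow_def_of_pos (by linarith), ← exp_sub, logGap]
  ring_nf

lemma logGap_eq {x : ℝ} (hx : 0 < x) :
    logGap x = (log x - x * log (1 + 1 / x)) / (x * (x + 1)) := by
  have hsucc : log (x + 1) = log x + log (1 + 1 / x) := by
    rw [← log_mul hx.ne' (by positivity)]
    congr 1
    field_simp
  rw [logGap, hsucc]
  field_simp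
  ring

lemma isEquivalent_logGap : logGap ~[atTop] fun x => log x / x ^ 2 := by
  have hnum : (fun x => log x - x * log (1 + 1 / x)) ~[atTop] log :=
    IsEquivalent.refl.sub_isLittleO <|
      ((tendsto_mul_log_one_add_div_atTop 1).isBigO_one ℝ).trans_isLittleO
        isLittleO_const_log_atTop
  have hden : (fun x : ℝ => x * (x + 1)) ~[atTop] fun x => x ^ 2 := by
    have hsucc : (fun x : ℝ => x + 1) ~[atTop] id :=
      IsEquivalent.refl.add_isLittleO (isLittleO_const_id_atTop 1)
    simp only [sq]
    exact (IsEquivalent.refl (u := id)).mul hsucc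
  refine (hnum.div hden).congr_left ?_
  filter_upwards [eventually_gt_atTop 0] with x hx using (logGap_eq hx).symm

lemma tendsto_logGap_atTop : Tendsto logGap atTop (𝓝 0) := by
  refine isEquivalent_logGap.symm.tendsto_nhds ?_
  have h := isLittleO_log_rpow_atTop (r := 2) two_pos
  simpa only [rpow_two] using h.tendsto_div_nhds_zero

lemma isEquivalent_exp_logGap_sub_one :
    (fun x => exp (logGap x) - 1) ~[atTop] fun x => log x / x ^ 2 :=
  (isEquivalent_exp_sub_one.comp_tendsto tendsto_logGap_atTop).trans isEquivalent_logGap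

lemma b_sub_eq {n : ℕ} (hn : 2 ≤ n) :
    b n - (2 - log (log n) / log n) =
      (log (log n / (n : ℝ) ^ 2) - log (exp (logGap n) - 1)) / log n := by
  have hn' : (2 : ℝ) ≤ n := by exact_mod_cast hn
  have hlog : 0 < log (n : ℝ) := log_pos (by linarith)
  rw [b, rpow_one_div_div_rpow_one_div_eq_exp_logGap (by linarith),
    log_div hlog.ne' (by positivity), log_pow]
  field_simp
  push_cast
  ring

theorem stmt_11 :
    Tendsto b atTop (nhds 2) ∧
      (fun n : ℕ => b n - (2 - Real.log (Real.log n) / Real.log n)) =o[atTop]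
        (fun n : ℕ => Real.log (Real.log n) / Real.log n) := by
  have hlog : Tendsto (fun n : ℕ => log (n : ℝ)) atTop atTop :=
    tendsto_log_atTop.comp tendsto_natCast_atTop_atTop
  have hdiff := (isEquivalent_exp_logGap_sub_one.comp_tendsto
    tendsto_natCast_atTop_atTop).tendsto_log_sub_log <| by
      filter_upwards [eventually_ge_atTop 2] with n hn
      have hn' : (2 : ℝ) ≤ n := by exact_mod_cast hn
      exact div_ne_zero (log_pos (by linarith)).ne' (by positivity)
  have hsmall : (fun n : ℕ => b n - (2 - log (log n) / log n)) =o[atTop]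
      fun n => log (log n) / log n := by
    refine (isLittleO_div_log_div (by simpa using hdiff.neg) hlog).congr' ?_ EventuallyEq.rfl
    filter_upwards [eventually_ge_atTop 2] with n hn using (b_sub_eq hn).symm
  have hratio : Tendsto (fun n : ℕ => log (log n) / log n) atTop (𝓝 0) :=
    isLittleO_log_id_atTop.tendsto_div_nhds_zero.comp hlog
  refine ⟨?_, hsmall⟩
  simpa using (hsmall.trans_tendsto hratio).add ((tendsto_const_nhds (x := (2 : ℝ))).sub hratio)
end

section
/- If two strictly increasing sequences of positive reals (s_n) and (t_n) each satisfy lim_{n→∞} s_{⌊nx⌋}/s_n = x and lim_{n→∞} t_{⌊nx⌋}/t_n = x for all x ∈ [0,1], then for any constants α, β ≥ 0 not both zero, the sequence u_n = α s_n + β t_n also satisfies lim_{n→∞} u_{⌊nx⌋}/u_n = x for all x ∈ [0,1]. -/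
open Filter Real

theorem stmt_15
    (s t : ℕ → ℝ) (hs : StrictMono s) (ht : StrictMono t)
    (hspos : ∀ n, 0 < s n) (htpos : ∀ n, 0 < t n)
    (hslim : ∀ x : ℝ, x ∈ Set.Icc (0 : ℝ) 1 →
      Tendsto (fun n : ℕ => s ⌊(n : ℝ) * x⌋₊ / s n) atTop (nhds x))
    (htlim : ∀ x : ℝ, x ∈ Set.Icc (0 : ℝ) 1 →
      Tendsto (fun n : ℕ => t ⌊(n : ℝ) * x⌋₊ / t n) atTop (nhds x))
    (α β : ℝ) (hα : 0 ≤ α) (hβ : 0 ≤ β) (hne : ¬(α = 0 ∧ β = 0)) :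
    ∀ x : ℝ, x ∈ Set.Icc (0 : ℝ) 1 →
      Tendsto
        (fun n : ℕ =>
          (α * s ⌊(n : ℝ) * x⌋₊ + β * t ⌊(n : ℝ) * x⌋₊) / (α * s n + β * t n))
        atTop (nhds x) := by
  intro x hx
  have hD : ∀ n, 0 < α * s n + β * t n := by
    intro n
    rcases (lt_or_eq_of_le hα).symm with h | h
    · rcases (lt_or_eq_of_le hβ).symm with h' | h'
      · exact absurd ⟨h.symm, h'.symm⟩ hne
      · have := mul_pos h' (htpos n)
        nlinarith [mul_nonneg hα (hspos n).le]
    · have := mul_pos h (hspos n)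
      nlinarith [mul_nonneg hβ (htpos n).le]
  have ha := hslim x hx
  have hb := htlim x hx
  have hmin : Tendsto (fun n : ℕ =>
      min (s ⌊(n : ℝ) * x⌋₊ / s n) (t ⌊(n : ℝ) * x⌋₊ / t n)) atTop (nhds x) := by
    simpa using ha.min hb
  have hmax : Tendsto (fun n : ℕ =>
      max (s ⌊(n : ℝ) * x⌋₊ / s n) (t ⌊(n : ℝ) * x⌋₊ / t n)) atTop (nhds x) := by
    simpa using ha.max hb
  refine tendsto_of_tendsto_of_tendsto_of_le_of_le hmin hmax ?_ ?_
  · intro n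
    set m := ⌊(n : ℝ) * x⌋₊ with hm
    have hsn := hspos n
    have htn := htpos n
    have hDn := hD n
    rw [le_div_iff₀ hDn]
    have e1 : s m / s n * s n = s m := div_mul_cancel₀ _ hsn.ne'
    have e2 : t m / t n * t n = t m := div_mul_cancel₀ _ htn.ne'
    have h1 : min (s m / s n) (t m / t n) ≤ s m / s n := min_le_left _ _
    have h2 : min (s m / s n) (t m / t n) ≤ t m / t n := min_le_right _ _
    nlinarith [mul_nonneg hα hsn.le, mul_nonneg hβ htn.le,
      mul_le_mul_of_nonneg_right h1 (mul_nonneg hα hsn.le),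
      mul_le_mul_of_nonneg_right h2 (mul_nonneg hβ htn.le)]
  · intro n
    set m := ⌊(n : ℝ) * x⌋₊ with hm
    have hsn := hspos n
    have htn := htpos n
    have hDn := hD n
    rw [div_le_iff₀ hDn]
    have e1 : s m / s n * s n = s m := div_mul_cancel₀ _ hsn.ne'
    have e2 : t m / t n * t n = t m := div_mul_cancel₀ _ htn.ne'
    have h1 : s m / s n ≤ max (s m / s n) (t m / t n) := le_max_left _ _
    have h2 : t m / t n ≤ max (s m / s n) (t m / t n) := le_max_right _ _
    nlinarith [mul_nonneg hα hsn.le, mul_nonneg hβ htn.le,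
      mul_le_mul_of_nonneg_right h1 (mul_nonneg hα hsn.le),
      mul_le_mul_of_nonneg_right h2 (mul_nonneg hβ htn.le)]
end
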